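/- arXiv:2306.07398 — 7 statements merged into one kernel-verified Lean document; each statement's English description precedes it below -/
import Mathlib

section
/- Let (aₙ) and (bₙ) be real sequences with aₙ → 0, bₙ → 0, bₙ ≠ 0 for all n, bₙ ≠ bₙ₊₁ for all n, aₙ/bₙ → L, and bₙ/bₙ₊₁ → c where c ≠ 1 is a real number (or bₙ/bₙ₊₁ → ∞). Then (aₙ − aₙ₊₁)/(bₙ − bₙ₊₁) → L. -/
/-!
Write the difference quotient as `aₙ/bₙ` plus the correction
`(aₙ/bₙ − aₙ₊₁/bₙ₊₁) / (bₙ/bₙ₊₁ − 1)`. Its numerator tends to `L − L = 0`, and its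
denominator tends to `c − 1 ≠ 0` or to `+∞`, so the correction vanishes in the limit.
-/

open Filter Topology

theorem sub_div_sub_eq_div_add {K : Type*} [Field K] {x y u v : K}
    (hu : u ≠ 0) (hv : v ≠ 0) (huv : u ≠ v) :
    (x - y) / (u - v) = x / u + (x / u - y / v) / (u / v - 1) := by
  have huv' : u - v ≠ 0 := sub_ne_zero.mpr huv
  rw [div_sub_one hv]
  field_simp
  ring

theorem Filter.Tendsto.div_sub_one_of_ne_one_or_atTop {ι : Type*} {l : Filter ι} {u r : ι → ℝ}
    (hu : Tendsto u l (𝓝 0))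
    (hr : (∃ c : ℝ, c ≠ 1 ∧ Tendsto r l (𝓝 c)) ∨ Tendsto r l atTop) :
    Tendsto (fun i => u i / (r i - 1)) l (𝓝 0) := by
  rcases hr with ⟨c, hc, hrc⟩ | hr_top
  · have h := hu.div (hrc.sub_const 1) (sub_ne_zero.mpr hc)
    rwa [zero_div] at h
  · exact hu.div_atTop (by simpa only [sub_eq_add_neg] using
      tendsto_atTop_add_const_right l (-1) hr_top)

theorem stmt_2_general (a b : ℕ → ℝ) (L : ℝ)
    (hbne : ∀ n, b n ≠ 0) (hbne' : ∀ n, b n ≠ b (n + 1))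
    (hab : Tendsto (fun n => a n / b n) atTop (nhds L))
    (hratio : (∃ c : ℝ, c ≠ 1 ∧ Tendsto (fun n => b n / b (n + 1)) atTop (nhds c)) ∨
      Tendsto (fun n => b n / b (n + 1)) atTop atTop) :
    Tendsto (fun n => (a n - a (n + 1)) / (b n - b (n + 1))) atTop (nhds L) := by
  have hstep : Tendsto (fun n => a n / b n - a (n + 1) / b (n + 1)) atTop (𝓝 0) := by
    simpa using hab.sub (hab.comp (tendsto_add_atTop_nat 1))
  have hlim := hab.add (hstep.div_sub_one_of_ne_one_or_atTop hratio)
  rw [add_zero] at hlim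
  exact hlim.congr fun n => (sub_div_sub_eq_div_add (hbne n) (hbne (n + 1)) (hbne' n)).symm

theorem stmt_2 (a b : ℕ → ℝ) (L : ℝ)
    (ha : Tendsto a atTop (nhds 0)) (hb : Tendsto b atTop (nhds 0))
    (hbne : ∀ n, b n ≠ 0) (hbne' : ∀ n, b n ≠ b (n + 1))
    (hab : Tendsto (fun n => a n / b n) atTop (nhds L))
    (hratio : (∃ c : ℝ, c ≠ 1 ∧ Tendsto (fun n => b n / b (n + 1)) atTop (nhds c)) ∨
      Tendsto (fun n => b n / b (n + 1)) atTop atTop) :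
    Tendsto (fun n => (a n - a (n + 1)) / (b n - b (n + 1))) atTop (nhds L) :=
  stmt_2_general a b L hbne hbne' hab hratio
end

section
/- Let h be a C¹ CBF for ẋ = f(x)+G(x)u with Lipschitz gradient, with compact superlevel set C, and let α be a Lipschitz extended class-κ function validating the CBF condition on D ⊇ C. Then the min-norm safe controller u*, defined by u*(x) = 0 when ∇h(x)f(x)+α(h(x)) ≥ 0 and u*(x) = −[(∇h(x)f(x)+α(h(x)))/‖∇h(x)G(x)‖²](∇h(x)G(x))ᵀ otherwise, is locally Lipschitz on C \ Z_{h,α}, where Z_{h,α} = {x ∈ C | ∇h(x)f(x)+α(h(x)) = 0 and ∇h(x)G(x) = 0}. -/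
open scoped RealInnerProductSpace
open Set

/-!
Write `a = ∇h·f + α ∘ h` and `b = ∇h·G`, both locally Lipschitz, so that
`u* = (max (-a) 0 / ‖b‖²) • b`. Near a point where `a > 0` the controller vanishes identically;
near a point where `b ≠ 0` it is built from locally Lipschitz functions by products and by
inverting `‖b‖²`, which stays away from zero. Outside `Z` one of the two cases occurs, because
when `b = 0` the CBF condition forces `a ≥ 0`.
-/

open Filter Topology

section LocallyLipschitz

variable {X Y Z : Type*} [PseudoEMetricSpace X] [PseudoEMetricSpace Y]
  [PseudoEMetricSpace Z]

lemma locallyLipschitz_pi {ι : Type*} [Fintype ι] {E : ι → Type*}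
    [∀ i, PseudoEMetricSpace (E i)] {g : X → ∀ i, E i}
    (hg : ∀ i, LocallyLipschitz fun x => g x i) : LocallyLipschitz g := by
  intro x
  choose K t ht hK using fun i => hg i x
  refine ⟨Finset.univ.sup K, ⋂ i, t i, iInter_mem.2 ht, fun y hy z hz => ?_⟩
  rw [edist_pi_def]
  refine Finset.sup_le fun i _ => ?_
  calc edist (g y i) (g z i) ≤ K i * edist y z := hK i (mem_iInter.1 hy i) (mem_iInter.1 hz i)
    _ ≤ Finset.univ.sup K * edist y z := by gcongr; exact Finset.le_sup (Finset.mem_univ i)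

lemma LocallyLipschitz.inner {E : Type*} [NormedAddCommGroup E] [InnerProductSpace ℝ E]
    {f g : X → E} (hf : LocallyLipschitz f) (hg : LocallyLipschitz g) :
    LocallyLipschitz fun x => ⟪f x, g x⟫ :=
  (contDiff_inner (n := 1)).locallyLipschitz.comp (hf.prodMk hg)

lemma LocallyLipschitzOn.comp {g : Y → Z} {f : X → Y} {s : Set X} {t : Set Y}
    (hg : LocallyLipschitzOn t g) (hf : LocallyLipschitzOn s f) (hst : MapsTo f s t) :
    LocallyLipschitzOn s (g ∘ f) := by
  intro x hx
  obtain ⟨Kg, u, hu, hgu⟩ := hg (hst hx)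
  obtain ⟨Kf, v, hv, hfv⟩ := hf hx
  have hfu : f ⁻¹' u ∈ 𝓝[s] x := (hf.continuousOn x hx).tendsto_nhdsWithin hst hu
  exact ⟨Kg * Kf, v ∩ f ⁻¹' u, inter_mem hv hfu,
    hgu.comp (hfv.mono inter_subset_left) fun y hy => hy.2⟩

variable {𝕜 E : Type*} [RCLike 𝕜] [NormedAddCommGroup E] [NormedSpace 𝕜 E]

lemma LocallyLipschitzOn.smul {f : X → 𝕜} {g : X → E} {s : Set X}
    (hf : LocallyLipschitzOn s f) (hg : LocallyLipschitzOn s g) :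
    LocallyLipschitzOn s fun x => f x • g x :=
  locallyLipschitzOn_iff_restrict.2 <|
    (contDiff_smul (𝕜 := 𝕜) (n := 1)).locallyLipschitz.comp (hf.restrict.prodMk hg.restrict)

lemma locallyLipschitzOn_inv₀ : LocallyLipschitzOn {0}ᶜ (Inv.inv : 𝕜 → 𝕜) := fun _ hx =>
  let ⟨K, t, ht, hK⟩ := (contDiffAt_inv 𝕜 hx).exists_lipschitzOnWith
  ⟨K, t, nhdsWithin_le_nhds ht, hK⟩

lemma LocallyLipschitzOn.inv₀ {f : X → 𝕜} {s : Set X}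
    (hf : LocallyLipschitzOn s f) (h0 : ∀ x ∈ s, f x ≠ 0) :
    LocallyLipschitzOn s fun x => (f x)⁻¹ :=
  locallyLipschitzOn_inv₀.comp hf h0

end LocallyLipschitz

section MinNormSolution

variable {E : Type*} [NormedAddCommGroup E] [NormedSpace ℝ E]

/-- For `E` an inner product space, the minimum-norm `u` with `a + ⟪v, u⟫ ≥ 0`, when one exists. -/
noncomputable def minNormSolution (a : ℝ) (v : E) : E := (max (-a) 0 / ‖v‖ ^ 2) • v

lemma minNormSolution_eq_ite (a : ℝ) (v : E) :
    minNormSolution a v = if 0 ≤ a then 0 else (-a / ‖v‖ ^ 2) • v := by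
  by_cases ha : 0 ≤ a
  · simp [minNormSolution, ha]
  · rw [minNormSolution, if_neg ha, max_eq_left (by linarith)]

lemma exists_lipschitzOnWith_minNormSolution {X : Type*} [PseudoEMetricSpace X] {a : X → ℝ}
    {b : X → E} (ha : LocallyLipschitz a) (hb : LocallyLipschitz b) {x : X}
    (hx : 0 < a x ∨ b x ≠ 0) :
    ∃ K, ∃ t ∈ 𝓝 x, LipschitzOnWith K (fun y => minNormSolution (a y) (b y)) t := by
  rcases hx with hpos | hne
  · refine ⟨0, {y | 0 < a y}, (isOpen_lt continuous_const ha.continuous).mem_nhds hpos,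
      fun y (hy : 0 < a y) z (hz : 0 < a z) => ?_⟩
    simp [minNormSolution_eq_ite, hy.le, hz.le]
  · set V := {y | b y ≠ 0}
    have hnum : LocallyLipschitzOn V fun y => max (-a y) 0 :=
      (ha.neg.max_const 0).locallyLipschitzOn
    have hnorm : LocallyLipschitzOn V fun y => ‖b y‖ :=
      (lipschitzWith_one_norm.locallyLipschitz.comp hb).locallyLipschitzOn
    have hsq : LocallyLipschitzOn V fun y => ‖b y‖ ^ 2 := by
      simpa only [smul_eq_mul, sq] using hnorm.smul hnorm
    have hinv := hsq.inv₀ fun y hy => pow_ne_zero 2 (norm_ne_zero_iff.2 hy)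
    have hsol : LocallyLipschitzOn V fun y => minNormSolution (a y) (b y) := by
      simpa only [minNormSolution, div_eq_mul_inv, smul_eq_mul] using
        (hnum.smul hinv).smul hb.locallyLipschitzOn
    obtain ⟨K, t, ht, hK⟩ := hsol hne
    rw [(isOpen_ne_fun hb.continuous continuous_const).nhdsWithin_eq hne] at ht
    exact ⟨K, t, ht, hK⟩

end MinNormSolution

theorem stmt_8_general (n m : ℕ) (h : EuclideanSpace ℝ (Fin n) → ℝ)
    (f : EuclideanSpace ℝ (Fin n) → EuclideanSpace ℝ (Fin n))
    (G : EuclideanSpace ℝ (Fin n) → Fin m → EuclideanSpace ℝ (Fin n))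
    (α : ℝ → ℝ) (Lα Lgrad : NNReal)
    (hf : LocallyLipschitz f) (hG : ∀ i, LocallyLipschitz fun x => G x i)
    (hC1 : ContDiff ℝ 1 h) (hgradLip : LipschitzWith Lgrad (gradient h))
    (hαLip : LipschitzWith Lα α)
    (C : Set (EuclideanSpace ℝ (Fin n)))
    (hcbf : ∀ x ∈ C, ∃ u : Fin m → ℝ,
      0 ≤ ⟪gradient h x, f x⟫ + α (h x) + ∑ i, ⟪gradient h x, G x i⟫ * u i)
    (ustar : EuclideanSpace ℝ (Fin n) → EuclideanSpace ℝ (Fin m))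
    (hustar : ∀ x, ustar x =
      if 0 ≤ ⟪gradient h x, f x⟫ + α (h x) then 0
      else (-(⟪gradient h x, f x⟫ + α (h x)) /
          ‖(show EuclideanSpace ℝ (Fin m) from WithLp.toLp 2 fun i => ⟪gradient h x, G x i⟫)‖ ^ 2) •
        (show EuclideanSpace ℝ (Fin m) from WithLp.toLp 2 fun i => ⟪gradient h x, G x i⟫))
    (Z : Set (EuclideanSpace ℝ (Fin n)))
    (hZ : Z = {x ∈ C | ⟪gradient h x, f x⟫ + α (h x) = 0 ∧
        (fun i => ⟪gradient h x, G x i⟫) = (0 : Fin m → ℝ)}) :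
    ∀ x ∈ C \ Z, ∃ K : NNReal, ∃ s ∈ nhds x, LipschitzOnWith K ustar (s ∩ (C \ Z)) := by
  set a := fun x => ⟪gradient h x, f x⟫ + α (h x)
  set b : EuclideanSpace ℝ (Fin n) → EuclideanSpace ℝ (Fin m) :=
    fun x => WithLp.toLp 2 fun i => ⟪gradient h x, G x i⟫
  have hustar_eq : ustar = fun x => minNormSolution (a x) (b x) :=
    funext fun x => by rw [hustar, minNormSolution_eq_ite]
  have ha : LocallyLipschitz a :=
    (hgradLip.locallyLipschitz.inner hf).add (hαLip.locallyLipschitz.comp hC1.locallyLipschitz)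
  have hb : LocallyLipschitz b := (PiLp.lipschitzWith_toLp 2 _).locallyLipschitz.comp <|
    locallyLipschitz_pi fun i => hgradLip.locallyLipschitz.inner (hG i)
  rintro x ⟨hxC, hxZ⟩
  have hx : 0 < a x ∨ b x ≠ 0 := by
    by_contra! ⟨hax, hbx⟩
    have hLgh : (fun i => ⟪gradient h x, G x i⟫) = 0 := by simpa [b] using hbx
    obtain ⟨u, hu⟩ := hcbf x hxC
    simp only [congrFun hLgh, Pi.zero_apply, zero_mul, Finset.sum_const_zero, add_zero] at hu
    exact hxZ (hZ ▸ ⟨hxC, le_antisymm hax hu, hLgh⟩)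
  obtain ⟨K, s, hs, hK⟩ := exists_lipschitzOnWith_minNormSolution ha hb hx
  exact ⟨K, s, hs, hustar_eq ▸ hK.mono inter_subset_left⟩

theorem stmt_8 (n m : ℕ) (h : EuclideanSpace ℝ (Fin n) → ℝ)
    (f : EuclideanSpace ℝ (Fin n) → EuclideanSpace ℝ (Fin n))
    (G : EuclideanSpace ℝ (Fin n) → Fin m → EuclideanSpace ℝ (Fin n))
    (α : ℝ → ℝ) (Lα Lgrad : NNReal)
    (hf : LocallyLipschitz f) (hG : ∀ i, LocallyLipschitz fun x => G x i)
    (hC1 : ContDiff ℝ 1 h) (hgradLip : LipschitzWith Lgrad (gradient h))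
    (hα : StrictMono α) (hα0 : α 0 = 0) (hαLip : LipschitzWith Lα α)
    (C : Set (EuclideanSpace ℝ (Fin n))) (hC : C = {x | 0 ≤ h x})
    (hcomp : IsCompact C)
    (hgrad : ∀ x ∈ frontier C, gradient h x ≠ 0)
    (hcbf : ∀ x ∈ C, ∃ u : Fin m → ℝ,
      0 ≤ ⟪gradient h x, f x⟫ + α (h x) + ∑ i, ⟪gradient h x, G x i⟫ * u i)
    (ustar : EuclideanSpace ℝ (Fin n) → EuclideanSpace ℝ (Fin m))
    (hustar : ∀ x, ustar x =
      if 0 ≤ ⟪gradient h x, f x⟫ + α (h x) then 0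
      else (-(⟪gradient h x, f x⟫ + α (h x)) /
          ‖(show EuclideanSpace ℝ (Fin m) from WithLp.toLp 2 fun i => ⟪gradient h x, G x i⟫)‖ ^ 2) •
        (show EuclideanSpace ℝ (Fin m) from WithLp.toLp 2 fun i => ⟪gradient h x, G x i⟫))
    (Z : Set (EuclideanSpace ℝ (Fin n)))
    (hZ : Z = {x ∈ C | ⟪gradient h x, f x⟫ + α (h x) = 0 ∧
        (fun i => ⟪gradient h x, G x i⟫) = (0 : Fin m → ℝ)}) :
    ∀ x ∈ C \ Z, ∃ K : NNReal, ∃ s ∈ nhds x, LipschitzOnWith K ustar (s ∩ (C \ Z)) :=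
  stmt_8_general n m h f G α Lα Lgrad hf hG hC1 hgradLip hαLip C hcbf ustar hustar Z hZ
end

section
/- Let h : ℝⁿ → ℝ be a C¹ weak CBF: C = {x | h(x) ≥ 0} is compact, h = 0 on ∂C, ∇h ≠ 0 on ∂C, the CBF condition holds on C, but for every open set D containing C the CBF condition fails at some point of D. Then there exists ȳ ∈ ∂C with ∇h(ȳ)·f(ȳ) = 0 and ∇h(ȳ)G(ȳ) = 0, i.e., Z_h ≠ ∅. -/
open scoped RealInnerProductSpace
open Set

/-!
The points where the CBF condition fails for every class-κ function accumulate at `C`, since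
otherwise the complement of their closure would be an open neighbourhood of `C` on which the
condition holds. At such a failure point the control directions are orthogonal to `∇h` and
`⟪∇h, f⟫ + h < 0`; both properties pass to an accumulation point `ȳ` (the strict inequality
weakly), and `ȳ` lies on `∂C` because the failure points lie outside `C`. There `h ȳ = 0`, so
`⟪∇h ȳ, f ȳ⟫ ≤ 0`, while the CBF condition at `ȳ` gives `⟪∇h ȳ, f ȳ⟫ ≥ 0`.
-/

theorem ContDiff.continuous_gradient {E : Type*} [NormedAddCommGroup E] [InnerProductSpace ℝ E]
    [CompleteSpace E] {h : E → ℝ} (hh : ContDiff ℝ 1 h) : Continuous (gradient h) :=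
  (InnerProductSpace.toDual ℝ E).symm.continuous.comp (hh.continuous_fderiv one_ne_zero)

theorem nonempty_inter_closure_of_forall_isOpen {X : Type*} [TopologicalSpace X]
    {C S : Set X} (hS : ∀ D, IsOpen D → C ⊆ D → ∃ x ∈ D, x ∈ S) : (C ∩ closure S).Nonempty := by
  by_contra hempty
  obtain ⟨x, hxD, hxS⟩ := hS (closure S)ᶜ isClosed_closure.isOpen_compl fun y hyC hyS =>
    hempty ⟨y, hyC, hyS⟩
  exact hxD (subset_closure hxS)

theorem eq_zero_of_forall_add_sum_mul_lt_zero {𝕜 ι : Type*} [Field 𝕜] [LinearOrder 𝕜]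
    [IsStrictOrderedRing 𝕜] [Fintype ι] [DecidableEq ι] {a : 𝕜} {b : ι → 𝕜}
    (hab : ∀ u : ι → 𝕜, a + ∑ i, b i * u i < 0) (j : ι) : b j = 0 := by
  by_contra hj
  have := hab (Pi.single j ((1 - a) / b j))
  simp only [Pi.single_apply, mul_ite, mul_zero, Finset.sum_ite_eq', Finset.mem_univ, if_true,
    mul_div_cancel₀ _ hj] at this
  linarith

section CBF

variable {E : Type*} [NormedAddCommGroup E] [InnerProductSpace ℝ E] [CompleteSpace E] {m : ℕ}

def CBFFailsAt (h : E → ℝ) (f : E → E) (G : E → Fin m → E) (x : E) : Prop :=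
  ∀ β : ℝ → ℝ, StrictMono β → β 0 = 0 → ∀ u : Fin m → ℝ,
    ⟪gradient h x, f x⟫ + β (h x) + ∑ i, ⟪gradient h x, G x i⟫ * u i < 0

variable {h : E → ℝ} {f : E → E} {G : E → Fin m → E} {x : E}

theorem CBFFailsAt.inner_gradient_control_eq_zero (hx : CBFFailsAt h f G x) (i : Fin m) :
    ⟪gradient h x, G x i⟫ = 0 := by
  classical
  exact eq_zero_of_forall_add_sum_mul_lt_zero (hx id strictMono_id rfl) i

theorem CBFFailsAt.inner_gradient_drift_add_lt_zero (hx : CBFFailsAt h f G x) :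
    ⟪gradient h x, f x⟫ + h x < 0 := by
  simpa using hx id strictMono_id rfl 0

theorem isClosed_setOf_inner_gradient_control_eq_zero_and_drift_add_nonpos
    (hh : ContDiff ℝ 1 h) (hf : Continuous f) (hG : Continuous G) :
    IsClosed {x | (∀ i, ⟪gradient h x, G x i⟫ = 0) ∧ ⟪gradient h x, f x⟫ + h x ≤ 0} := by
  simp only [ofPred_and, ofPred_forall]
  exact (isClosed_iInter fun i => isClosed_eq
      (hh.continuous_gradient.inner ((continuous_apply i).comp hG)) continuous_const).inter
    (isClosed_le ((hh.continuous_gradient.inner hf).add hh.continuous) continuous_const)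

end CBF

theorem stmt_10_general (n m : ℕ) (h : EuclideanSpace ℝ (Fin n) → ℝ)
    (f : EuclideanSpace ℝ (Fin n) → EuclideanSpace ℝ (Fin n))
    (G : EuclideanSpace ℝ (Fin n) → Fin m → EuclideanSpace ℝ (Fin n))
    (α : ℝ → ℝ) (hα : StrictMono α) (hα0 : α 0 = 0)
    (hfcont : Continuous f) (hGcont : Continuous G)
    (hC1 : ContDiff ℝ 1 h)
    (C : Set (EuclideanSpace ℝ (Fin n))) (hC : C = {x | 0 ≤ h x})
    (hzero : ∀ x ∈ frontier C, h x = 0)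
    (hcbf : ∀ x ∈ C, ∃ u : Fin m → ℝ,
      0 ≤ ⟪gradient h x, f x⟫ + α (h x) + ∑ i, ⟪gradient h x, G x i⟫ * u i)
    (hweak : ∀ D : Set (EuclideanSpace ℝ (Fin n)), IsOpen D → C ⊆ D →
      ∃ x ∈ D, ∀ β : ℝ → ℝ, StrictMono β → β 0 = 0 → ∀ u : Fin m → ℝ,
        ⟪gradient h x, f x⟫ + β (h x) + ∑ i, ⟪gradient h x, G x i⟫ * u i < 0) :
    ∃ y ∈ frontier C, ⟪gradient h y, f y⟫ = 0 ∧ ∀ i, ⟪gradient h y, G y i⟫ = 0 := by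
  have hCclosed : IsClosed C := hC ▸ isClosed_le continuous_const hC1.continuous
  set S := {x | CBFFailsAt h f G x}
  have hSC : S ⊆ Cᶜ := fun x hx hxC => by
    obtain ⟨u, hu⟩ := hcbf x hxC
    exact (hx α hα hα0 u).not_ge hu
  obtain ⟨y, hyC, hyS⟩ := nonempty_inter_closure_of_forall_isOpen (S := S) hweak
  have hyF : y ∈ frontier C := by
    rw [frontier_eq_closure_inter_closure, hCclosed.closure_eq]
    exact ⟨hyC, closure_mono hSC hyS⟩
  obtain ⟨hGy, hfy⟩ := closure_minimal
    (t := {x | (∀ i, ⟪gradient h x, G x i⟫ = 0) ∧ ⟪gradient h x, f x⟫ + h x ≤ 0})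
    (fun x hx => ⟨hx.inner_gradient_control_eq_zero, hx.inner_gradient_drift_add_lt_zero.le⟩)
    (isClosed_setOf_inner_gradient_control_eq_zero_and_drift_add_nonpos hC1 hfcont hGcont) hyS
  obtain ⟨u, hu⟩ := hcbf y hyC
  simp only [hGy, zero_mul, Finset.sum_const_zero, add_zero, hzero y hyF, hα0] at hu hfy
  exact ⟨y, hyF, le_antisymm hfy hu, hGy⟩

theorem stmt_10 (n m : ℕ) (h : EuclideanSpace ℝ (Fin n) → ℝ)
    (f : EuclideanSpace ℝ (Fin n) → EuclideanSpace ℝ (Fin n))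
    (G : EuclideanSpace ℝ (Fin n) → Fin m → EuclideanSpace ℝ (Fin n))
    (α : ℝ → ℝ) (hα : StrictMono α) (hα0 : α 0 = 0)
    (hfcont : Continuous f) (hGcont : Continuous G)
    (hC1 : ContDiff ℝ 1 h)
    (C : Set (EuclideanSpace ℝ (Fin n))) (hC : C = {x | 0 ≤ h x})
    (hcomp : IsCompact C)
    (hzero : ∀ x ∈ frontier C, h x = 0)
    (hgrad : ∀ x ∈ frontier C, gradient h x ≠ 0)
    (hcbf : ∀ x ∈ C, ∃ u : Fin m → ℝ,
      0 ≤ ⟪gradient h x, f x⟫ + α (h x) + ∑ i, ⟪gradient h x, G x i⟫ * u i)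
    (hweak : ∀ D : Set (EuclideanSpace ℝ (Fin n)), IsOpen D → C ⊆ D →
      ∃ x ∈ D, ∀ β : ℝ → ℝ, StrictMono β → β 0 = 0 → ∀ u : Fin m → ℝ,
        ⟪gradient h x, f x⟫ + β (h x) + ∑ i, ⟪gradient h x, G x i⟫ * u i < 0) :
    ∃ y ∈ frontier C, ⟪gradient h y, f y⟫ = 0 ∧ ∀ i, ⟪gradient h y, G y i⟫ = 0 :=
  stmt_10_general n m h f G α hα hα0 hfcont hGcont hC1 C hC hzero hcbf hweak
end

section
/- Consider f(x) = (x₂, 0), G(x) = (0, x₂²) on ℝ², h(x) = 1 − x₁² − x₂², α(r) = r, and the min-norm controller magnitude |u₂*(x)| = (2x₁x₂ − h(x))/(2x₂³) on D₋ = {x in the unit disk | −2x₁x₂ + h(x) < 0}. Then |u₂*| is unbounded near (1,0): for every M > 0 there exists x ∈ D₋ with ‖x − (1,0)‖ < 1/M and |u₂*(x)| > M. -/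
/-!
Approach `(1, 0)` along the parabola `x = (1 - t², t)`, `t → 0⁺`. There `h(x) = t²(1 - t²)`, so
`-2x₁x₂ + h(x) = t(1 - t²)(t - 2) < 0` for `0 < t < 1`, the point stays in the disk, and
`|u₂*(x)| = (1 - t²)(2 - t) / (2t²)`, which grows like `1/t²`.
-/

open Filter Topology

theorem tendsto_parabola_nhds_one_zero :
    Tendsto (fun t : ℝ => ((1 - t ^ 2, t) : ℝ × ℝ)) (𝓝 0) (𝓝 (1, 0)) := by
  have hcont : Continuous (fun t : ℝ => ((1 - t ^ 2, t) : ℝ × ℝ)) := by fun_prop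
  simpa using hcont.tendsto 0

theorem parabola_mem_closedDisk {t : ℝ} (ht : t ^ 2 ≤ 1) : (1 - t ^ 2) ^ 2 + t ^ 2 ≤ 1 := by
  nlinarith [sq_nonneg t]

theorem parabola_barrier_neg {t : ℝ} (h0 : 0 < t) (h1 : t < 1) :
    -2 * (1 - t ^ 2) * t + (1 - (1 - t ^ 2) ^ 2 - t ^ 2) < 0 := by
  have hfactor : -2 * (1 - t ^ 2) * t + (1 - (1 - t ^ 2) ^ 2 - t ^ 2)
      = -(t * (1 - t ^ 2) * (2 - t)) := by ring
  rw [hfactor, neg_neg_iff_pos]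
  have : 0 < 1 - t ^ 2 := by nlinarith
  have : 0 < 2 - t := by linarith
  positivity

theorem parabola_controller_eq {t : ℝ} (ht : t ≠ 0) :
    (2 * (1 - t ^ 2) * t - (1 - (1 - t ^ 2) ^ 2 - t ^ 2)) / (2 * t ^ 3)
      = (1 - t ^ 2) * (2 - t) / 2 * (t ^ 2)⁻¹ := by
  field_simp
  ring

theorem tendsto_parabola_controller_atTop :
    Tendsto (fun t : ℝ => (2 * (1 - t ^ 2) * t - (1 - (1 - t ^ 2) ^ 2 - t ^ 2)) / (2 * t ^ 3))
      (𝓝[>] 0) atTop := by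
  have hcoeff : Tendsto (fun t : ℝ => (1 - t ^ 2) * (2 - t) / 2) (𝓝[>] 0) (𝓝 1) := by
    have hcont : Continuous (fun t : ℝ => (1 - t ^ 2) * (2 - t) / 2) := by fun_prop
    simpa using (hcont.tendsto 0).mono_left nhdsWithin_le_nhds
  have hinv : Tendsto (fun t : ℝ => (t ^ 2)⁻¹) (𝓝[>] 0) atTop := by
    simpa only [Function.comp_def, inv_pow] using (tendsto_pow_atTop two_ne_zero).comp (tendsto_inv_nhdsGT_zero (𝕜 := ℝ))
  refine (hcoeff.pos_mul_atTop one_pos hinv).congr' ?_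
  filter_upwards [self_mem_nhdsWithin] with t ht
  exact (parabola_controller_eq (ne_of_gt ht)).symm

theorem stmt_14 :
    ∀ M : ℝ, 0 < M → ∃ x : ℝ × ℝ,
      x.1 ^ 2 + x.2 ^ 2 ≤ 1 ∧
      -2 * x.1 * x.2 + (1 - x.1 ^ 2 - x.2 ^ 2) < 0 ∧
      dist x ((1 : ℝ), (0 : ℝ)) < 1 / M ∧
      M < (2 * x.1 * x.2 - (1 - x.1 ^ 2 - x.2 ^ 2)) / (2 * x.2 ^ 3) := by
  intro M hM
  have hclose : ∀ᶠ t : ℝ in 𝓝[>] 0, dist ((1 - t ^ 2, t) : ℝ × ℝ) (1, 0) < 1 / M :=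
    (tendsto_parabola_nhds_one_zero.mono_left nhdsWithin_le_nhds).eventually
      (Metric.ball_mem_nhds _ (by positivity))
  have hlt_one : ∀ᶠ t : ℝ in 𝓝[>] 0, t < 1 :=
    nhdsWithin_le_nhds (gt_mem_nhds one_pos)
  obtain ⟨t, ht_pos, ht_lt_one, ht_close, ht_large⟩ :=
    ((eventually_mem_nhdsWithin : ∀ᶠ t in 𝓝[>] (0 : ℝ), t ∈ Set.Ioi 0).and (hlt_one.and
      (hclose.and (tendsto_parabola_controller_atTop.eventually_gt_atTop M)))).exists
  exact ⟨(1 - t ^ 2, t), parabola_mem_closedDisk (by nlinarith [Set.mem_Ioi.mp ht_pos]),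
    parabola_barrier_neg ht_pos ht_lt_one, ht_close, ht_large⟩
end

section
/- Consider f(x) = (x₂, 0), G(x) = (0, 1) on ℝ², h(x) = 1 − x₁² − x₂², α(r) = r. Then the min-norm controller magnitude |u₁*(x)| = (2x₁x₂ − h(x))/(2|x₂|) on D₋ = {x in the unit disk | −2x₁x₂ + h(x) < 0} is bounded on the closed unit disk: there exists M > 0 with |u₁*(x)| ≤ M for all x ∈ D₋. -/
/-! On the closed unit disk `h = 1 - x₁² - x₂² ≥ 0` and `|x₁| ≤ 1`, so the numerator is at most
`2 x₁ x₂ ≤ 2 |x₂|` and the quotient is at most `1`. -/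

lemma two_mul_mul_sub_le_two_mul_abs {a b : ℝ} (hdisk : a ^ 2 + b ^ 2 ≤ 1) :
    2 * a * b - (1 - a ^ 2 - b ^ 2) ≤ 2 * |b| := by
  have ha : |a| ≤ 1 := (sq_le_one_iff_abs_le_one a).mp (by nlinarith [sq_nonneg b])
  calc 2 * a * b - (1 - a ^ 2 - b ^ 2) ≤ 2 * (a * b) := by linarith
    _ ≤ 2 * (|a| * |b|) := by rw [← abs_mul]; gcongr; exact le_abs_self _
    _ ≤ 2 * |b| := by gcongr; exact mul_le_of_le_one_left (abs_nonneg b) ha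

theorem stmt_15 :
    ∃ M : ℝ, 0 < M ∧ ∀ x : ℝ × ℝ,
      x.1 ^ 2 + x.2 ^ 2 ≤ 1 →
      -2 * x.1 * x.2 + (1 - x.1 ^ 2 - x.2 ^ 2) < 0 →
      (2 * x.1 * x.2 - (1 - x.1 ^ 2 - x.2 ^ 2)) / (2 * |x.2|) ≤ M :=
  ⟨1, one_pos, fun _ hdisk _ =>
    div_le_one_of_le₀ (two_mul_mul_sub_le_two_mul_abs hdisk) (by positivity)⟩
end

section
/- Boundedness test: Under the hypotheses of the unboundedness direction test (h ∈ C² a CBF with compact superlevel set C, f, G differentiable at x̄ ∈ Z, α differentiable at 0), if the only solution (v, c₁, c₂) of the system ∇h(x̄)·v = c₁, vᵀβ_f(x̄) = c₂, vᵀβ_G(x̄) = 0 with c₁ ≥ 0 and c₂ ≤ 0 is v = 0, then for every unit vector v along which x̄ + vt approaches x̄ from within C or tangentially (i.e., ∇h(x̄)·v ≥ 0), limsup_{t→0⁺} ‖u*(x̄+vt)‖ < ∞. -/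
open scoped RealInnerProductSpace
open Set Filter
open scoped Topology

lemma aux_fderiv_inner_gradient {n : ℕ} (h : EuclideanSpace ℝ (Fin n) → ℝ)
    (y v : EuclideanSpace ℝ (Fin n)) : fderiv ℝ h y v = ⟪gradient h y, v⟫ :=
  (InnerProductSpace.toDual_symm_apply).symm

lemma aux_grad_diff {n : ℕ} (h : EuclideanSpace ℝ (Fin n) → ℝ) (hC2 : ContDiff ℝ 2 h)
    (xb : EuclideanSpace ℝ (Fin n)) : DifferentiableAt ℝ (gradient h) xb := by
  have h1 : ContDiff ℝ 1 (fderiv ℝ h) := hC2.fderiv_right (le_refl _)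
  exact (((InnerProductSpace.toDual ℝ (EuclideanSpace ℝ (Fin n))).symm :
    StrongDual ℝ (EuclideanSpace ℝ (Fin n)) ≃ₗᵢ[ℝ] EuclideanSpace ℝ (Fin n)
    ).differentiable.differentiableAt).comp xb (h1.differentiable one_ne_zero).differentiableAt

lemma aux_grad_symm {n : ℕ} (h : EuclideanSpace ℝ (Fin n) → ℝ) (hC2 : ContDiff ℝ 2 h)
    (xb u w : EuclideanSpace ℝ (Fin n)) :
    ⟪fderiv ℝ (gradient h) xb u, w⟫ = ⟪fderiv ℝ (gradient h) xb w, u⟫ := by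
  have hsym := (hC2.contDiffAt (x := xb)).isSymmSndFDerivAt (by simp)
  set e : StrongDual ℝ (EuclideanSpace ℝ (Fin n)) ≃ₗᵢ[ℝ] EuclideanSpace ℝ (Fin n) :=
    (InnerProductSpace.toDual ℝ (EuclideanSpace ℝ (Fin n))).symm with he
  have hge : gradient h = ⇑e ∘ fderiv ℝ h := rfl
  have heq : fderiv ℝ (gradient h) xb =
      (e : StrongDual ℝ (EuclideanSpace ℝ (Fin n)) →L[ℝ] EuclideanSpace ℝ (Fin n)).comp
        (fderiv ℝ (fderiv ℝ h) xb) := by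
    rw [hge]; exact e.comp_fderiv
  rw [heq]
  simp only [ContinuousLinearMap.coe_comp', Function.comp_apply,
    ContinuousLinearMap.coe_coe, LinearIsometryEquiv.coe_coe]
  show ⟪(InnerProductSpace.toDual ℝ _).symm _, w⟫ = ⟪(InnerProductSpace.toDual ℝ _).symm _, u⟫
  rw [InnerProductSpace.toDual_symm_apply, InnerProductSpace.toDual_symm_apply]
  exact hsym u w

lemma aux_coord_le {m : ℕ} (b : EuclideanSpace ℝ (Fin m)) (i : Fin m) : |b i| ≤ ‖b‖ := by
  rw [EuclideanSpace.norm_eq]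
  have h1 : ‖b i‖ ^ 2 ≤ ∑ j, ‖b j‖ ^ 2 :=
    Finset.single_le_sum (f := fun j => ‖b j‖ ^ 2) (fun j _ => by positivity) (Finset.mem_univ i)
  calc |b i| = Real.sqrt (‖b i‖ ^ 2) := by rw [Real.sqrt_sq_eq_abs]; simp
    _ ≤ _ := Real.sqrt_le_sqrt h1

lemma aux_ustar_norm {m : ℕ} (N : ℝ) (B : EuclideanSpace ℝ (Fin m)) (hB : B ≠ 0) :
    ‖(-N / ‖B‖ ^ 2) • B‖ = |N| / ‖B‖ := by
  have hB' : (0:ℝ) < ‖B‖ := norm_pos_iff.mpr hB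
  rw [norm_smul, Real.norm_eq_abs, abs_div, abs_neg, abs_pow, abs_norm]
  field_simp

theorem stmt_17 (n m : ℕ) (h : EuclideanSpace ℝ (Fin n) → ℝ)
    (f : EuclideanSpace ℝ (Fin n) → EuclideanSpace ℝ (Fin n))
    (G : EuclideanSpace ℝ (Fin n) → Fin m → EuclideanSpace ℝ (Fin n))
    (α : ℝ → ℝ) (hα : StrictMono α) (hα0 : α 0 = 0)
    (hαdiff : DifferentiableAt ℝ α 0)
    (hC2 : ContDiff ℝ 2 h)
    (C : Set (EuclideanSpace ℝ (Fin n))) (hC : C = {x | 0 ≤ h x})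
    (hcomp : IsCompact C)
    (hgrad : ∀ x ∈ frontier C, gradient h x ≠ 0)
    (hcbf : ∀ x ∈ C, ∃ u : Fin m → ℝ,
      0 ≤ ⟪gradient h x, f x⟫ + α (h x) + ∑ i, ⟪gradient h x, G x i⟫ * u i)
    (xb : EuclideanSpace ℝ (Fin n))
    (hfdiff : DifferentiableAt ℝ f xb)
    (hGdiff : ∀ i, DifferentiableAt ℝ (fun x => G x i) xb)
    -- xb ∈ Z
    (hxb0 : h xb = 0) (hxbf : ⟪gradient h xb, f xb⟫ = 0)
    (hxbG : ∀ i, ⟪gradient h xb, G xb i⟫ = 0)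
    -- β vectors
    (βf : EuclideanSpace ℝ (Fin n))
    (hβf : βf = fderiv ℝ (gradient h) xb (f xb) +
      (ContinuousLinearMap.adjoint (fderiv ℝ f xb)) (gradient h xb) +
      deriv α (h xb) • gradient h xb)
    (βg : Fin m → EuclideanSpace ℝ (Fin n))
    (hβg : ∀ i, βg i = fderiv ℝ (gradient h) xb (G xb i) +
      (ContinuousLinearMap.adjoint (fderiv ℝ (fun x => G x i) xb)) (gradient h xb))
    -- only the trivial solution has c₁ ≥ 0 and c₂ ≤ 0
    (honly : ∀ w : EuclideanSpace ℝ (Fin n),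
      0 ≤ ⟪gradient h xb, w⟫ → ⟪w, βf⟫ ≤ 0 → (∀ i, ⟪w, βg i⟫ = 0) → w = 0)
    -- the min-norm controller
    (ustar : EuclideanSpace ℝ (Fin n) → EuclideanSpace ℝ (Fin m))
    (hustar : ∀ x, ustar x =
      if 0 ≤ ⟪gradient h x, f x⟫ + α (h x) then 0
      else (-(⟪gradient h x, f x⟫ + α (h x)) /
          ‖(show EuclideanSpace ℝ (Fin m) from WithLp.toLp 2 (fun i => ⟪gradient h x, G x i⟫))‖ ^ 2) •
        (show EuclideanSpace ℝ (Fin m) from WithLp.toLp 2 (fun i => ⟪gradient h x, G x i⟫))) :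
    ∀ v : EuclideanSpace ℝ (Fin n), ‖v‖ = 1 → 0 ≤ ⟪gradient h xb, v⟫ →
      ∃ M : ℝ, ∀ᶠ t in nhdsWithin (0 : ℝ) (Ioi 0), ‖ustar (xb + t • v)‖ ≤ M := by
  intro v hv hv0
  have hγ0 : xb + (0:ℝ) • v = xb := by simp
  have hγ : HasDerivAt (fun t : ℝ => xb + t • v) v 0 := by
    simpa using ((hasDerivAt_id (0:ℝ)).smul_const v).const_add xb
  have hgdiff : DifferentiableAt ℝ (gradient h) xb := aux_grad_diff h hC2 xb
  have hgf : HasFDerivAt (gradient h) (fderiv ℝ (gradient h) xb) (xb + (0:ℝ) • v) := by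
    rw [hγ0]; exact hgdiff.hasFDerivAt
  have hg1 : HasDerivAt (fun t : ℝ => gradient h (xb + t • v)) (fderiv ℝ (gradient h) xb v) 0 :=
    hgf.comp_hasDerivAt (f := fun t : ℝ => xb + t • v) 0 hγ
  have hff : HasFDerivAt f (fderiv ℝ f xb) (xb + (0:ℝ) • v) := by
    rw [hγ0]; exact hfdiff.hasFDerivAt
  have hf1 : HasDerivAt (fun t : ℝ => f (xb + t • v)) (fderiv ℝ f xb v) 0 :=
    hff.comp_hasDerivAt (f := fun t : ℝ => xb + t • v) 0 hγ
  have hhd : DifferentiableAt ℝ h xb := (hC2.differentiable (by norm_num)).differentiableAt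
  have hhf : HasFDerivAt h (fderiv ℝ h xb) (xb + (0:ℝ) • v) := by
    rw [hγ0]; exact hhd.hasFDerivAt
  have hh1 : HasDerivAt (fun t : ℝ => h (xb + t • v)) (fderiv ℝ h xb v) 0 :=
    hhf.comp_hasDerivAt (f := fun t : ℝ => xb + t • v) 0 hγ
  have hαf : HasDerivAt α (deriv α 0) ((fun t : ℝ => h (xb + t • v)) 0) := by
    simp only [hγ0, hxb0]
    exact hαdiff.hasDerivAt
  have hα1 : HasDerivAt (fun t : ℝ => α (h (xb + t • v))) (deriv α 0 * fderiv ℝ h xb v) 0 :=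
    hαf.comp 0 hh1
  set Nf : ℝ → ℝ := fun t => ⟪gradient h (xb + t • v), f (xb + t • v)⟫ + α (h (xb + t • v))
    with hNfdef
  set a : ℝ := ⟪βf, v⟫ with hadef
  have hNd : HasDerivAt Nf a 0 := by
    have hinner : HasDerivAt (fun t : ℝ => ⟪gradient h (xb + t • v), f (xb + t • v)⟫)
        (⟪gradient h xb, fderiv ℝ f xb v⟫ + ⟪fderiv ℝ (gradient h) xb v, f xb⟫) 0 := by
      have := hg1.inner ℝ hf1
      simpa [hγ0] using this
    have hsum := hinner.fun_add hα1
    refine hsum.congr_deriv ?_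
    rw [hadef, hβf, inner_add_left, inner_add_left, real_inner_smul_left, hxb0,
      aux_grad_symm h hC2 xb (f xb) v, ContinuousLinearMap.adjoint_inner_left,
      aux_fderiv_inner_gradient]
    ring
  have hN0 : Nf 0 = 0 := by
    simp only [hNfdef, hγ0, hxb0, hxbf, hα0, add_zero]
  set c : Fin m → ℝ := fun i => ⟪βg i, v⟫ with hcdef
  have hbd : ∀ i, HasDerivAt (fun t : ℝ => ⟪gradient h (xb + t • v), G (xb + t • v) i⟫) (c i) 0 := by
    intro i
    have hGf : HasFDerivAt (fun x => G x i) (fderiv ℝ (fun x => G x i) xb) (xb + (0:ℝ) • v) := by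
      rw [hγ0]; exact (hGdiff i).hasFDerivAt
    have hG1 : HasDerivAt (fun t : ℝ => G (xb + t • v) i) (fderiv ℝ (fun x => G x i) xb v) 0 :=
      hGf.comp_hasDerivAt (f := fun t : ℝ => xb + t • v) 0 hγ
    have h2 : HasDerivAt (fun t : ℝ => ⟪gradient h (xb + t • v), G (xb + t • v) i⟫)
        (⟪gradient h xb, fderiv ℝ (fun x => G x i) xb v⟫
          + ⟪fderiv ℝ (gradient h) xb v, G xb i⟫) 0 := by
      have := hg1.inner ℝ hG1
      simpa [hγ0] using this
    convert h2 using 1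
    rw [hcdef]
    simp only []
    rw [hβg i, inner_add_left, aux_grad_symm h hC2 xb (G xb i) v,
      ContinuousLinearMap.adjoint_inner_left]
    ring
  have hmono : 𝓝[>] (0:ℝ) ≤ 𝓝[≠] (0:ℝ) :=
    nhdsWithin_mono 0 (fun x hx => ne_of_gt hx)
  have hNslope : Tendsto (fun t => Nf t / t) (𝓝[≠] (0:ℝ)) (𝓝 a) := by
    have := hasDerivAt_iff_tendsto_slope.mp hNd
    refine this.congr' ?_
    filter_upwards [self_mem_nhdsWithin] with t ht
    simp only [slope_def_field, hN0, sub_zero]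
  -- case split
  by_cases hall : ∀ i, c i = 0
  · -- then a > 0
    have ha : 0 < a := by
      by_contra hle
      push_neg at hle
      have hz := honly v hv0 (by rwa [real_inner_comm, ← hadef])
        (fun i => by rw [real_inner_comm]; exact hall i)
      rw [hz] at hv
      simp at hv
    refine ⟨0, ?_⟩
    have hev : ∀ᶠ t in 𝓝[≠] (0:ℝ), a / 2 < Nf t / t :=
      hNslope.eventually (eventually_gt_nhds (half_lt_self ha))
    filter_upwards [hmono hev, self_mem_nhdsWithin] with t hts ht
    have ht0 : (0:ℝ) < t := ht
    have hNpos : 0 < Nf t := by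
      have h1 : 0 < Nf t / t := lt_trans (half_pos ha) hts
      have := mul_pos h1 ht0
      rwa [div_mul_cancel₀ _ (ne_of_gt ht0)] at this
    rw [hustar (xb + t • v), if_pos (le_of_lt hNpos)]
    simp
  · push_neg at hall
    obtain ⟨i, hci⟩ := hall
    set M : ℝ := (|a| + 1) / (|c i| / 2) with hMdef
    have hM0 : 0 ≤ M := by positivity
    refine ⟨M, ?_⟩
    have hcislope : Tendsto (fun t => (fun s : ℝ =>
        ⟪gradient h (xb + s • v), G (xb + s • v) i⟫) t / t) (𝓝[≠] (0:ℝ)) (𝓝 (c i)) := by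
      have := hasDerivAt_iff_tendsto_slope.mp (hbd i)
      refine this.congr' ?_
      filter_upwards [self_mem_nhdsWithin] with t ht
      simp only [slope_def_field, hγ0, hxbG, sub_zero]
    have hev1 : ∀ᶠ t in 𝓝[≠] (0:ℝ), |Nf t / t| < |a| + 1 :=
      hNslope.abs.eventually (eventually_lt_nhds (lt_add_one |a|))
    have hev2 : ∀ᶠ t in 𝓝[≠] (0:ℝ), |c i| / 2 <
        |(fun s : ℝ => ⟪gradient h (xb + s • v), G (xb + s • v) i⟫) t / t| :=
      hcislope.abs.eventually (eventually_gt_nhds (half_lt_self (abs_pos.mpr hci)))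
    filter_upwards [hmono hev1, hmono hev2, self_mem_nhdsWithin] with t h1 h2 ht
    have ht0 : (0:ℝ) < t := ht
    have ht' : t ≠ 0 := ne_of_gt ht0
    have habs : |Nf t| = |Nf t / t| * t := by
      rw [abs_div, abs_of_pos ht0, div_mul_cancel₀ _ ht']
    have hNb : |Nf t| ≤ (|a| + 1) * t := by
      rw [habs]; exact mul_le_mul_of_nonneg_right h1.le ht0.le
    set B : EuclideanSpace ℝ (Fin m) :=
      WithLp.toLp 2 (fun j => ⟪gradient h (xb + t • v), G (xb + t • v) j⟫) with hBdef
    have hBi : B i = ⟪gradient h (xb + t • v), G (xb + t • v) i⟫ := rfl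
    have habs2 : |B i| = |B i / t| * t := by
      rw [abs_div, abs_of_pos ht0, div_mul_cancel₀ _ ht']
    have hBb : (|c i| / 2) * t ≤ |B i| := by
      rw [habs2]
      refine mul_le_mul_of_nonneg_right ?_ ht0.le
      rw [hBi]
      exact h2.le
    have hBipos : 0 < |B i| := lt_of_lt_of_le (mul_pos (half_pos (abs_pos.mpr hci)) ht0) hBb
    have hBne : B ≠ 0 := by
      intro h0
      rw [h0] at hBipos
      simp at hBipos
    have hnorm : (|c i| / 2) * t ≤ ‖B‖ := le_trans hBb (aux_coord_le B i)
    rw [hustar (xb + t • v)]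
    split_ifs with hcond
    · simpa using hM0
    · show ‖(-Nf t / ‖B‖ ^ 2) • B‖ ≤ M
      rw [aux_ustar_norm (Nf t) B hBne]
      have hd : |Nf t| / ‖B‖ ≤ ((|a| + 1) * t) / ((|c i| / 2) * t) :=
        div_le_div₀ (by positivity) hNb (mul_pos (half_pos (abs_pos.mpr hci)) ht0) hnorm
      rwa [mul_div_mul_right _ _ ht'] at hd
end

section
/- Let N, D : (0, ε) → ℝ be continuously differentiable with N(t) < 0, D(t) > 0 on (0,ε), N(t) → 0, D(t) → 0 as t → 0⁺, N' bounded on (0, ε), and limsup_{t→0⁺} (−N(t)/D(t)) = +∞. Then there exists a sequence tᵢ → 0⁺ with D'(tᵢ) → 0. -/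
/-!
Since `N → 0` and `|N'| ≤ B`, the mean value theorem gives `-N t ≤ B t`, so along the times where
`-N/D` exceeds `M` we get `D t < (B + 1) t / M`: the positive function `D` is frequently `o(t)`.
Given such a time `u` with `D u < c u`, and `s < u / 2` with `D s < c u` (possible since `D → 0`),
the mean value theorem on `[s, u]` produces a point where `|D'| < 2c`.
-/

open Set Filter Topology

lemma abs_le_mul_of_abs_deriv_le_of_tendsto_zero {f : ℝ → ℝ} {a B : ℝ}
    (hf : DifferentiableOn ℝ f (Ioo 0 a)) (hf' : ∀ t ∈ Ioo 0 a, |deriv f t| ≤ B)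
    (hf0 : Tendsto f (𝓝[>] 0) (𝓝 0)) {u : ℝ} (hu : u ∈ Ioo 0 a) : |f u| ≤ B * u := by
  have hlip : ∀ s ∈ Ioo 0 u, |f u - f s| ≤ B * (u - s) := by
    intro s hs
    have hs' : s ∈ Ioo 0 a := ⟨hs.1, hs.2.trans hu.2⟩
    have := (convex_Ioo 0 a).norm_image_sub_le_of_norm_deriv_le
      (fun t ht => hf.differentiableAt (isOpen_Ioo.mem_nhds ht)) hf' hs' hu
    rwa [Real.norm_eq_abs, Real.norm_eq_abs, abs_of_pos (sub_pos.2 hs.2)] at this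
  have hlhs : Tendsto (fun s => |f u - f s|) (𝓝[>] 0) (𝓝 |f u - 0|) :=
    (tendsto_const_nhds.sub hf0).abs
  have hrhs : Tendsto (fun s => B * (u - s)) (𝓝[>] 0) (𝓝 (B * (u - 0))) :=
    ((continuous_const.mul (continuous_const.sub continuous_id)).tendsto 0).mono_left
      nhdsWithin_le_nhds
  simpa using le_of_tendsto_of_tendsto hlhs hrhs (mem_of_superset (Ioo_mem_nhdsGT hu.1) hlip)

lemma frequently_lt_mul_of_limsup_div_eq_top {N D : ℝ → ℝ} {B : ℝ}
    (hN : ∀ᶠ t in 𝓝[>] 0, -N t ≤ B * t) (hD : ∀ᶠ t in 𝓝[>] 0, 0 < D t)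
    (hlimsup : limsup (fun t => ((-N t / D t : ℝ) : EReal)) (𝓝[>] 0) = ⊤)
    {c : ℝ} (hc : 0 < c) : ∃ᶠ t in 𝓝[>] 0, D t < c * t := by
  set M := (|B| + 1) / c
  have hM : 0 < M := by positivity
  have hcM : c * M = |B| + 1 := mul_div_cancel₀ _ hc.ne'
  have hfreq : ∃ᶠ t in 𝓝[>] 0, (M : EReal) < ((-N t / D t : ℝ) : EReal) :=
    frequently_lt_of_lt_limsup (by isBoundedDefault) (hlimsup ▸ EReal.coe_lt_top M)
  refine (hfreq.and_eventually ((hN.and hD).and self_mem_nhdsWithin)).mono ?_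
  rintro t ⟨hMt, ⟨hNt, hDt⟩, ht⟩
  have hMD : M * D t < -N t := (lt_div_iff₀ hDt).1 (EReal.coe_lt_coe_iff.1 hMt)
  have hBt : B * t < c * M * t := by
    rw [hcM]
    nlinarith [le_abs_self B, ht]
  nlinarith

lemma frequently_abs_deriv_lt_of_frequently_lt_mul {D : ℝ → ℝ}
    (hdiff : ∀ᶠ t in 𝓝[>] 0, DifferentiableAt ℝ D t) (hpos : ∀ᶠ t in 𝓝[>] 0, 0 < D t)
    (hD0 : Tendsto D (𝓝[>] 0) (𝓝 0)) (hsmall : ∀ c > 0, ∃ᶠ t in 𝓝[>] 0, D t < c * t)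
    {δ : ℝ} (hδ : 0 < δ) : ∃ᶠ t in 𝓝[>] 0, |deriv D t| < δ := by
  obtain ⟨a, ha, hgood⟩ := (nhdsGT_basis 0).eventually_iff.1 (hdiff.and hpos)
  rw [(nhdsGT_basis 0).frequently_iff]
  intro η hη
  obtain ⟨u, ⟨hu0, hua⟩, hDu⟩ := (Eventually.and_frequently (Ioo_mem_nhdsGT (lt_min ha hη))
    (hsmall (δ / 2) (by positivity))).exists
  obtain ⟨s, ⟨hs0, hsu⟩, hDs⟩ := (Eventually.and (Ioo_mem_nhdsGT (half_pos hu0))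
    (hD0.eventually (gt_mem_nhds (by positivity : 0 < δ / 2 * u)))).exists
  have hIcc : Icc s u ⊆ Ioo 0 a := fun t ht => ⟨hs0.trans_le ht.1, ht.2.trans_lt
    (hua.trans_le (min_le_left _ _))⟩
  obtain ⟨x, hx, hslope⟩ := exists_deriv_eq_slope D (by linarith : s < u)
    (fun t ht => (hgood (hIcc ht)).1.continuousAt.continuousWithinAt)
    (fun t ht => (hgood (hIcc (Ioo_subset_Icc_self ht))).1.differentiableWithinAt)
  refine ⟨x, ⟨hs0.trans hx.1, hx.2.trans (hua.trans_le (min_le_right _ _))⟩, ?_⟩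
  have hDu0 : 0 < D u := (hgood (hIcc (right_mem_Icc.2 (by linarith)))).2
  have hDs0 : 0 < D s := (hgood (hIcc (left_mem_Icc.2 (by linarith)))).2
  -- both values lie in `(0, δ u / 2)` and `u - s > u / 2`
  have hgap : |D u - D s| < δ * (u - s) := by
    rw [abs_sub_lt_iff]
    constructor <;> nlinarith
  rwa [hslope, abs_div, abs_of_pos (by linarith : 0 < u - s), div_lt_iff₀ (by linarith)]

lemma exists_seq_tendsto_nhdsGT_of_frequently_abs_lt {f : ℝ → ℝ} {ε : ℝ} (hε : 0 < ε)
    (h : ∀ δ > 0, ∃ᶠ t in 𝓝[>] 0, |f t| < δ) :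
    ∃ t : ℕ → ℝ, (∀ i, t i ∈ Ioo 0 ε) ∧ Tendsto t atTop (𝓝[>] 0) ∧
      Tendsto (fun i => f (t i)) atTop (𝓝 0) := by
  have hpick : ∀ n : ℕ, ∃ t ∈ Ioo 0 (min ε (1 / (n + 1))), |f t| < 1 / (n + 1) := fun n =>
    (Eventually.and_frequently (Ioo_mem_nhdsGT (lt_min hε (by positivity)))
      (h _ (by positivity))).exists
  choose t ht hft using hpick
  have ht0 : Tendsto t atTop (𝓝 0) :=
    squeeze_zero (fun n => (ht n).1.le) (fun n => (ht n).2.le.trans (min_le_right _ _))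
      tendsto_one_div_add_atTop_nhds_zero_nat
  exact ⟨t, fun n => ⟨(ht n).1, (ht n).2.trans_le (min_le_left _ _)⟩,
    tendsto_nhdsWithin_iff.2 ⟨ht0, Eventually.of_forall fun n => (ht n).1⟩,
    squeeze_zero_norm (fun n => (hft n).le) tendsto_one_div_add_atTop_nhds_zero_nat⟩

theorem stmt_19_general (ε : ℝ) (hε : 0 < ε) (N D : ℝ → ℝ) (B : ℝ)
    (hN : ContDiffOn ℝ 1 N (Ioo 0 ε)) (hD : ContDiffOn ℝ 1 D (Ioo 0 ε))
    (hDpos : ∀ t ∈ Ioo 0 ε, 0 < D t)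
    (hN0 : Tendsto N (nhdsWithin 0 (Ioi 0)) (nhds 0))
    (hD0 : Tendsto D (nhdsWithin 0 (Ioi 0)) (nhds 0))
    (hN'bdd : ∀ t ∈ Ioo 0 ε, |deriv N t| ≤ B)
    (hlimsup : limsup (fun t => ((-N t / D t : ℝ) : EReal)) (nhdsWithin 0 (Ioi 0)) = ⊤) :
    ∃ t : ℕ → ℝ, (∀ i, t i ∈ Ioo 0 ε) ∧
      Tendsto t atTop (nhdsWithin 0 (Ioi 0)) ∧
      Tendsto (fun i => deriv D (t i)) atTop (nhds 0) := by
  have hIoo : Ioo 0 ε ∈ 𝓝[>] (0 : ℝ) := Ioo_mem_nhdsGT hε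
  have hNbound : ∀ᶠ t in 𝓝[>] 0, -N t ≤ B * t := mem_of_superset hIoo fun t ht =>
    (neg_le_abs _).trans
      (abs_le_mul_of_abs_deriv_le_of_tendsto_zero (hN.differentiableOn one_ne_zero) hN'bdd hN0 ht)
  have hDpos' : ∀ᶠ t in 𝓝[>] 0, 0 < D t := mem_of_superset hIoo hDpos
  have hDdiff : ∀ᶠ t in 𝓝[>] 0, DifferentiableAt ℝ D t := mem_of_superset hIoo fun t ht =>
    (hD.differentiableOn one_ne_zero).differentiableAt (isOpen_Ioo.mem_nhds ht)
  exact exists_seq_tendsto_nhdsGT_of_frequently_abs_lt hε fun δ hδ =>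
    frequently_abs_deriv_lt_of_frequently_lt_mul hDdiff hDpos' hD0
      (fun c hc => frequently_lt_mul_of_limsup_div_eq_top hNbound hDpos' hlimsup hc) hδ

theorem stmt_19 (ε : ℝ) (hε : 0 < ε) (N D : ℝ → ℝ) (B : ℝ)
    (hN : ContDiffOn ℝ 1 N (Ioo 0 ε)) (hD : ContDiffOn ℝ 1 D (Ioo 0 ε))
    (hNneg : ∀ t ∈ Ioo 0 ε, N t < 0) (hDpos : ∀ t ∈ Ioo 0 ε, 0 < D t)
    (hN0 : Tendsto N (nhdsWithin 0 (Ioi 0)) (nhds 0))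
    (hD0 : Tendsto D (nhdsWithin 0 (Ioi 0)) (nhds 0))
    (hN'bdd : ∀ t ∈ Ioo 0 ε, |deriv N t| ≤ B)
    (hlimsup : limsup (fun t => ((-N t / D t : ℝ) : EReal)) (nhdsWithin 0 (Ioi 0)) = ⊤) :
    ∃ t : ℕ → ℝ, (∀ i, t i ∈ Ioo 0 ε) ∧
      Tendsto t atTop (nhdsWithin 0 (Ioi 0)) ∧
      Tendsto (fun i => deriv D (t i)) atTop (nhds 0) :=
  stmt_19_general ε hε N D B hN hD hDpos hN0 hD0 hN'bdd hlimsup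
end
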